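/- Let R be an integral domain with involution. Let N : (H, ρ, s) ⇒ (K, τ, t) and N' : (H', ρ', s') ⇒ (K', τ', t') be pointed Lagrangian relations (i.e. N is a Lagrangian submodule of (H ⊕ K, (−ρ) ⊕ τ) with (s,t) ∈ Q ⊗_R N, and similarly for N'). Then N ⊕ N', regarded as a submodule of (H ⊕ H') ⊕ (K ⊕ K'), is Lagrangian with respect to the form (−(ρ ⊕_{s,s'} ρ')) ⊕ (τ ⊕_{t,t'} τ'), and (s+s', t+t') lies in Q ⊗_R (N ⊕ N'). -/
import Mathlib


open TensorProduct

/-- A skew-Hermitian form on an `R`-module `H`, relative to an involution `σ` of `R`. -/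
structure SHForm (R : Type) [CommRing R] (σ : R →+* R)
    (H : Type) [AddCommGroup H] [Module R H] : Type where
  form : H → H → R
  add_left : ∀ x x' y, form (x + x') y = form x y + form x' y
  smul_left : ∀ (r : R) (x y : H), form (r • x) y = r * form x y
  add_right : ∀ x y y', form x (y + y') = form x y + form x y'
  smul_right : ∀ (r : R) (x y : H), form x (r • y) = σ r * form x y
  skew : ∀ x y, form x y = - σ (form y x)
  nondeg : ∀ x, (∀ y, form x y = 0) → x = 0

/-- A skew-Hermitian form together with its extension to the rationalization `Q ⊗[R] H`. -/
structure SHFormQ (R : Type) [CommRing R] (σ : R →+* R)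
    (Q : Type) [CommRing Q] [Algebra R Q] (σQ : Q →+* Q)
    (H : Type) [AddCommGroup H] [Module R H] extends SHForm R σ H where
  formQ : Q ⊗[R] H → Q ⊗[R] H → Q
  formQ_add_left : ∀ x x' y, formQ (x + x') y = formQ x y + formQ x' y
  formQ_smul_left : ∀ (q : Q) x y, formQ (q • x) y = q * formQ x y
  formQ_add_right : ∀ x y y', formQ x (y + y') = formQ x y + formQ x y'
  formQ_smul_right : ∀ (q : Q) x y, formQ x (q • y) = σQ q * formQ x y
  formQ_skew : ∀ x y, formQ x y = - σQ (formQ y x)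
  formQ_compat : ∀ x y : H,
    formQ ((1 : Q) ⊗ₜ[R] x) ((1 : Q) ⊗ₜ[R] y) = algebraMap R Q (form x y)

/-- A pointed skew-Hermitian module: a distinguished element `pt` of the rationalization
with `ρ(pt, pt) = 0` and `ρ(pt, H) ⊆ R`. -/
structure PointedSH (R : Type) [CommRing R] (σ : R →+* R)
    (Q : Type) [CommRing Q] [Algebra R Q] (σQ : Q →+* Q)
    (H : Type) [AddCommGroup H] [Module R H] extends SHFormQ R σ Q σQ H where
  pt : Q ⊗[R] H
  pt_isotropic : formQ pt pt = 0
  pt_integral : ∀ x : H, ∃ r : R, formQ pt ((1 : Q) ⊗ₜ[R] x) = algebraMap R Q r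


section Aux
variable {R : Type} [CommRing R] {σ : R →+* R}
  {Q : Type} [CommRing Q] [Algebra R Q] {σQ : Q →+* Q}
  {H K : Type} [AddCommGroup H] [Module R H] [AddCommGroup K] [Module R K]

@[simp] lemma form_zero_right (ρ : SHForm R σ H) (x : H) : ρ.form x 0 = 0 := by
  have h := ρ.add_right x 0 0
  rw [add_zero] at h
  exact left_eq_add.mp h

@[simp] lemma formQ_zero_right (ρ : SHFormQ R σ Q σQ H) (x : Q ⊗[R] H) : ρ.formQ x 0 = 0 := by
  have h := ρ.formQ_add_right x 0 0
  rw [add_zero] at h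
  exact left_eq_add.mp h

@[simp] lemma formQ_zero_left (ρ : SHFormQ R σ Q σQ H) (x : Q ⊗[R] H) : ρ.formQ 0 x = 0 := by
  have h := ρ.formQ_add_left 0 0 x
  rw [add_zero] at h
  exact left_eq_add.mp h

/-- The pt pairs against elements of `N` the same way through both forms. -/
lemma keyA (PH : PointedSH R σ Q σQ H) (PK : PointedSH R σ Q σQ K)
    (N : Submodule R (H × K))
    (hNv : ∀ n ∈ N, ∀ y ∈ N, - PH.form n.1 y.1 + PK.form n.2 y.2 = 0)
    (hpt : (PH.pt, PK.pt) ∈ Submodule.span Q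
      {v : (Q ⊗[R] H) × (Q ⊗[R] K) | ∃ n ∈ N, v = ((1 : Q) ⊗ₜ[R] n.1, (1 : Q) ⊗ₜ[R] n.2)})
    {y : H × K} (hy : y ∈ N) :
    PH.formQ PH.pt ((1:Q) ⊗ₜ[R] y.1) = PK.formQ PK.pt ((1:Q) ⊗ₜ[R] y.2) := by
  have main : - PH.formQ PH.pt ((1:Q) ⊗ₜ[R] y.1) + PK.formQ PK.pt ((1:Q) ⊗ₜ[R] y.2) = 0 := by
    refine Submodule.span_induction
      (p := fun v _ => - PH.formQ v.1 ((1:Q) ⊗ₜ[R] y.1) + PK.formQ v.2 ((1:Q) ⊗ₜ[R] y.2) = 0)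
      ?_ ?_ ?_ ?_ hpt
    · rintro v ⟨n, hn, rfl⟩
      simp only [PH.formQ_compat, PK.formQ_compat]
      rw [← map_neg, ← map_add, hNv n hn y hy, map_zero]
    · simp
    · intro u v _ _ hu hv
      simp only [Prod.fst_add, Prod.snd_add, PH.formQ_add_left, PK.formQ_add_left]
      linear_combination hu + hv
    · intro q v _ hv
      simp only [Prod.smul_fst, Prod.smul_snd, PH.formQ_smul_left, PK.formQ_smul_left]
      linear_combination q * hv
  linear_combination -main

/-- Semilinear extension: evaluating the combined form against the pt pair. -/
lemma keyB (PH : PointedSH R σ Q σQ H) (PK : PointedSH R σ Q σQ K)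
    (N : Submodule R (H × K))
    (hpt : (PH.pt, PK.pt) ∈ Submodule.span Q
      {v : (Q ⊗[R] H) × (Q ⊗[R] K) | ∃ n ∈ N, v = ((1 : Q) ⊗ₜ[R] n.1, (1 : Q) ⊗ₜ[R] n.2)})
    (a : Q ⊗[R] H) (b : Q ⊗[R] K) (k : Q)
    (hgen : ∀ n ∈ N, - PH.formQ a ((1:Q) ⊗ₜ[R] n.1) + PK.formQ b ((1:Q) ⊗ₜ[R] n.2)
        = - PH.formQ PH.pt ((1:Q) ⊗ₜ[R] n.1) * k) :
    - PH.formQ a PH.pt + PK.formQ b PK.pt = 0 := by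
  have main : - PH.formQ a PH.pt + PK.formQ b PK.pt = - PH.formQ PH.pt PH.pt * k := by
    refine Submodule.span_induction
      (p := fun v _ => - PH.formQ a v.1 + PK.formQ b v.2 = - PH.formQ PH.pt v.1 * k)
      ?_ ?_ ?_ ?_ hpt
    · rintro v ⟨n, hn, rfl⟩
      exact hgen n hn
    · simp
    · intro u v _ _ hu hv
      simp only [Prod.fst_add, Prod.snd_add, PH.formQ_add_right, PK.formQ_add_right]
      linear_combination hu + hv
    · intro q v _ hv
      simp only [Prod.smul_fst, Prod.smul_snd, PH.formQ_smul_right, PK.formQ_smul_right]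
      linear_combination σQ q * hv
  rw [PH.pt_isotropic] at main
  simpa using main

end Aux

/-- the direct sum of two pointed Lagrangian relations is a pointed Lagrangian
relation with respect to the twisted sum forms. -/
theorem stmt5 (R : Type) [CommRing R] [IsDomain R]
    (σ : R →+* R) (hσ : ∀ r, σ (σ r) = r)
    (Q : Type) [Field Q] [Algebra R Q] [IsFractionRing R Q]
    (σQ : Q →+* Q) (hσQ : ∀ q, σQ (σQ q) = q)
    (hσQc : ∀ r : R, σQ (algebraMap R Q r) = algebraMap R Q (σ r))
    (H K H' K' : Type)
    [AddCommGroup H] [Module R H] [Module.Finite R H]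
    [AddCommGroup K] [Module R K] [Module.Finite R K]
    [AddCommGroup H'] [Module R H'] [Module.Finite R H']
    [AddCommGroup K'] [Module R K'] [Module.Finite R K']
    (PH : PointedSH R σ Q σQ H) (PK : PointedSH R σ Q σQ K)
    (PH' : PointedSH R σ Q σQ H') (PK' : PointedSH R σ Q σQ K')
    (N : Submodule R (H × K)) (N' : Submodule R (H' × K'))
    -- `N` is Lagrangian with respect to `(-ρ) ⊕ τ`:
    (hN : ∀ x : H × K, x ∈ N ↔ ∀ y ∈ N, - PH.form x.1 y.1 + PK.form x.2 y.2 = 0)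
    (hN' : ∀ x : H' × K', x ∈ N' ↔ ∀ y ∈ N', - PH'.form x.1 y.1 + PK'.form x.2 y.2 = 0)
    -- the distinguished elements `(s, t)` and `(s', t')` lie in the rationalizations of
    -- `N` and `N'`:
    (hNpt : (PH.pt, PK.pt) ∈ Submodule.span Q
      {v : (Q ⊗[R] H) × (Q ⊗[R] K) | ∃ n ∈ N, v = ((1 : Q) ⊗ₜ[R] n.1, (1 : Q) ⊗ₜ[R] n.2)})
    (hN'pt : (PH'.pt, PK'.pt) ∈ Submodule.span Q
      {v : (Q ⊗[R] H') × (Q ⊗[R] K') | ∃ n ∈ N', v = ((1 : Q) ⊗ₜ[R] n.1, (1 : Q) ⊗ₜ[R] n.2)}) :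
    -- the direct sum `N ⊕ N'` inside `(H ⊕ H') ⊕ (K ⊕ K')`:
    let S : Set ((H × H') × (K × K')) :=
      {x | (x.1.1, x.2.1) ∈ N ∧ (x.1.2, x.2.2) ∈ N'}
    -- the form `(-(ρ ⊕_{s,s'} ρ')) ⊕ (τ ⊕_{t,t'} τ')`:
    let Φ : ((H × H') × (K × K')) → ((H × H') × (K × K')) → Q := fun x y =>
      - (algebraMap R Q (PH.form x.1.1 y.1.1) + algebraMap R Q (PH'.form x.1.2 y.1.2)
          + PH.formQ ((1 : Q) ⊗ₜ[R] x.1.1) PH.pt * PH'.formQ PH'.pt ((1 : Q) ⊗ₜ[R] y.1.2)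
          - PH.formQ PH.pt ((1 : Q) ⊗ₜ[R] y.1.1) * PH'.formQ ((1 : Q) ⊗ₜ[R] x.1.2) PH'.pt)
      + (algebraMap R Q (PK.form x.2.1 y.2.1) + algebraMap R Q (PK'.form x.2.2 y.2.2)
          + PK.formQ ((1 : Q) ⊗ₜ[R] x.2.1) PK.pt * PK'.formQ PK'.pt ((1 : Q) ⊗ₜ[R] y.2.2)
          - PK.formQ PK.pt ((1 : Q) ⊗ₜ[R] y.2.1) * PK'.formQ ((1 : Q) ⊗ₜ[R] x.2.2) PK'.pt)
    -- `N ⊕ N'` is Lagrangian for `Φ`: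
    (∀ x : (H × H') × (K × K'), x ∈ S ↔ ∀ y ∈ S, Φ x y = 0) ∧
    -- and the distinguished element `(s+s', t+t')` lies in its rationalization:
    ((PH.pt, PH'.pt), (PK.pt, PK'.pt)) ∈ Submodule.span Q
      {v : ((Q ⊗[R] H) × (Q ⊗[R] H')) × ((Q ⊗[R] K) × (Q ⊗[R] K')) | ∃ x ∈ S,
        v = (((1 : Q) ⊗ₜ[R] x.1.1, (1 : Q) ⊗ₜ[R] x.1.2),
             ((1 : Q) ⊗ₜ[R] x.2.1, (1 : Q) ⊗ₜ[R] x.2.2))} := by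
  intro S Φ
  have inj : Function.Injective (algebraMap R Q) := IsFractionRing.injective R Q
  have kA : ∀ y1 y2, (y1, y2) ∈ N →
      PH.formQ PH.pt ((1:Q) ⊗ₜ[R] y1) = PK.formQ PK.pt ((1:Q) ⊗ₜ[R] y2) :=
    fun y1 y2 hy => keyA PH PK N (fun n hn => (hN n).mp hn) hNpt hy
  have kA' : ∀ y1 y2, (y1, y2) ∈ N' →
      PH'.formQ PH'.pt ((1:Q) ⊗ₜ[R] y1) = PK'.formQ PK'.pt ((1:Q) ⊗ₜ[R] y2) :=
    fun y1 y2 hy => keyA PH' PK' N' (fun n hn => (hN' n).mp hn) hN'pt hy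
  have kAs : ∀ y1 y2, (y1, y2) ∈ N →
      PH.formQ ((1:Q) ⊗ₜ[R] y1) PH.pt = PK.formQ ((1:Q) ⊗ₜ[R] y2) PK.pt := by
    intro y1 y2 hy
    rw [PH.formQ_skew, PK.formQ_skew, kA y1 y2 hy]
  have kAs' : ∀ y1 y2, (y1, y2) ∈ N' →
      PH'.formQ ((1:Q) ⊗ₜ[R] y1) PH'.pt = PK'.formQ ((1:Q) ⊗ₜ[R] y2) PK'.pt := by
    intro y1 y2 hy
    rw [PH'.formQ_skew, PK'.formQ_skew, kA' y1 y2 hy]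
  constructor
  · intro x
    constructor
    · intro hx y hy
      obtain ⟨hx1, hx2⟩ := hx
      obtain ⟨hy1, hy2⟩ := hy
      have e1 : PH.form x.1.1 y.1.1 = PK.form x.2.1 y.2.1 := by
        have h := (hN (x.1.1, x.2.1)).mp hx1 (y.1.1, y.2.1) hy1
        linear_combination -h
      have e2 : PH'.form x.1.2 y.1.2 = PK'.form x.2.2 y.2.2 := by
        have h := (hN' (x.1.2, x.2.2)).mp hx2 (y.1.2, y.2.2) hy2
        linear_combination -h
      simp only [Φ]
      rw [e1, e2, kAs _ _ hx1, kA' _ _ hy2, kA _ _ hy1, kAs' _ _ hx2]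
      ring
    · intro hx
      have step1 : ∀ n ∈ N, - PH.formQ ((1:Q) ⊗ₜ[R] x.1.1) ((1:Q) ⊗ₜ[R] n.1)
          + PK.formQ ((1:Q) ⊗ₜ[R] x.2.1) ((1:Q) ⊗ₜ[R] n.2)
          = - PH.formQ PH.pt ((1:Q) ⊗ₜ[R] n.1)
            * (PH'.formQ ((1:Q) ⊗ₜ[R] x.1.2) PH'.pt - PK'.formQ ((1:Q) ⊗ₜ[R] x.2.2) PK'.pt) := by
        intro n hn
        have h1 := hx ((n.1, 0), (n.2, 0)) ⟨hn, N'.zero_mem⟩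
        simp only [Φ, tmul_zero, form_zero_right, formQ_zero_right, map_zero, mul_zero,
          zero_mul, add_zero] at h1
        have hc := kA n.1 n.2 hn
        rw [PH.formQ_compat, PK.formQ_compat]
        linear_combination h1 - PK'.formQ ((1:Q) ⊗ₜ[R] x.2.2) PK'.pt * hc
      have hA : - PH.formQ ((1:Q) ⊗ₜ[R] x.1.1) PH.pt
          + PK.formQ ((1:Q) ⊗ₜ[R] x.2.1) PK.pt = 0 :=
        keyB PH PK N hNpt _ _ _ step1
      have step2 : ∀ n' ∈ N', - PH'.form x.1.2 n'.1 + PK'.form x.2.2 n'.2 = 0 := by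
        intro n' hn'
        have h1 := hx ((0, n'.1), (0, n'.2)) ⟨N.zero_mem, hn'⟩
        simp only [Φ, tmul_zero, form_zero_right, formQ_zero_right, map_zero, mul_zero,
          zero_mul, add_zero] at h1
        have hc := kA' n'.1 n'.2 hn'
        have h2 : algebraMap R Q (- PH'.form x.1.2 n'.1 + PK'.form x.2.2 n'.2)
            = algebraMap R Q 0 := by
          rw [map_zero, map_add, map_neg]
          linear_combination h1 - PK'.formQ PK'.pt ((1:Q) ⊗ₜ[R] n'.2) * hA
            + PH.formQ ((1:Q) ⊗ₜ[R] x.1.1) PH.pt * hc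
        exact inj h2
      have hx2 : (x.1.2, x.2.2) ∈ N' := (hN' _).mpr step2
      have hD : - PH'.formQ ((1:Q) ⊗ₜ[R] x.1.2) PH'.pt
          + PK'.formQ ((1:Q) ⊗ₜ[R] x.2.2) PK'.pt = 0 := by
        apply keyB PH' PK' N' hN'pt _ _ 0
        intro n' hn'
        rw [PH'.formQ_compat, PK'.formQ_compat, ← map_neg, ← map_add, step2 n' hn',
          map_zero, mul_zero]
      have hx1 : (x.1.1, x.2.1) ∈ N := by
        apply (hN _).mpr
        intro n hn
        have h1 := step1 n hn
        rw [PH.formQ_compat, PK.formQ_compat] at h1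
        have h2 : algebraMap R Q (- PH.form x.1.1 n.1 + PK.form x.2.1 n.2)
            = algebraMap R Q 0 := by
          rw [map_zero, map_add, map_neg]
          linear_combination h1 + PH.formQ PH.pt ((1:Q) ⊗ₜ[R] n.1) * hD
        exact inj h2
      exact ⟨hx1, hx2⟩
  · let T := Submodule.span Q
      {v : ((Q ⊗[R] H) × (Q ⊗[R] H')) × ((Q ⊗[R] K) × (Q ⊗[R] K')) | ∃ x ∈ S,
        v = (((1 : Q) ⊗ₜ[R] x.1.1, (1 : Q) ⊗ₜ[R] x.1.2),
             ((1 : Q) ⊗ₜ[R] x.2.1, (1 : Q) ⊗ₜ[R] x.2.2))}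
    show _ ∈ T
    have part1 : ∀ v ∈ Submodule.span Q
        {v : (Q ⊗[R] H) × (Q ⊗[R] K) | ∃ n ∈ N, v = ((1 : Q) ⊗ₜ[R] n.1, (1 : Q) ⊗ₜ[R] n.2)},
        (((v.1, 0), (v.2, 0)) : ((Q ⊗[R] H) × (Q ⊗[R] H')) × ((Q ⊗[R] K) × (Q ⊗[R] K'))) ∈ T := by
      intro v hv
      refine Submodule.span_induction
        (p := fun v _ => (((v.1, 0), (v.2, 0)) :
          ((Q ⊗[R] H) × (Q ⊗[R] H')) × ((Q ⊗[R] K) × (Q ⊗[R] K'))) ∈ T) ?_ ?_ ?_ ?_ hv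
      · rintro w ⟨n, hn, rfl⟩
        exact Submodule.subset_span ⟨((n.1, 0), (n.2, 0)), ⟨hn, N'.zero_mem⟩, by simp⟩
      · exact T.zero_mem
      · intro u w _ _ hu hw
        simpa [Prod.mk_add_mk] using T.add_mem hu hw
      · intro q w _ hw
        simpa [Prod.smul_mk] using T.smul_mem q hw
    have part2 : ∀ v ∈ Submodule.span Q
        {v : (Q ⊗[R] H') × (Q ⊗[R] K') | ∃ n ∈ N', v = ((1 : Q) ⊗ₜ[R] n.1, (1 : Q) ⊗ₜ[R] n.2)},
        (((0, v.1), (0, v.2)) : ((Q ⊗[R] H) × (Q ⊗[R] H')) × ((Q ⊗[R] K) × (Q ⊗[R] K'))) ∈ T := by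
      intro v hv
      refine Submodule.span_induction
        (p := fun v _ => (((0, v.1), (0, v.2)) :
          ((Q ⊗[R] H) × (Q ⊗[R] H')) × ((Q ⊗[R] K) × (Q ⊗[R] K'))) ∈ T) ?_ ?_ ?_ ?_ hv
      · rintro w ⟨n, hn, rfl⟩
        exact Submodule.subset_span ⟨((0, n.1), (0, n.2)), ⟨N.zero_mem, hn⟩, by simp⟩
      · exact T.zero_mem
      · intro u w _ _ hu hw
        simpa [Prod.mk_add_mk] using T.add_mem hu hw
      · intro q w _ hw
        simpa [Prod.smul_mk] using T.smul_mem q hw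
    simpa [Prod.mk_add_mk] using T.add_mem (part1 _ hNpt) (part2 _ hN'pt)
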